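/- Apolarity for modules: let k be a field, S := k[y₁,…,yₙ], and F a free S-module of finite rank. For an S-submodule K ⊆ F set K^⊥ := { φ ∈ Hom_k(F,k) : φ vanishes on K }, and for a k-subspace M ⊆ Hom_k(F,k) set M^⊥ := { f ∈ F : φ(f) = 0 for all φ ∈ M }. Then the assignments K ↦ K^⊥ and M ↦ M^⊥ are mutually inverse, inclusion-reversing bijections between (a) the set of S-submodules K ⊆ F such that F/K is finite-dimensional over k (cofinite submodules), and (b) the set of finite-dimensional k-subspaces M ⊆ Hom_k(F,k) that are stable under the contraction action of S. -/
import Mathlib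


variable (k : Type*) [Field k] (n : ℕ)
  (F : Type*) [AddCommGroup F] [Module (MvPolynomial (Fin n) k) F]
  [Module k F] [IsScalarTower k (MvPolynomial (Fin n) k) F]

/-- Contraction: the `k`-linear endomorphism `f ↦ s • f` of `F`. -/
noncomputable def contrMul (s : MvPolynomial (Fin n) k) : F →ₗ[k] F :=
  (LinearMap.lsmul (MvPolynomial (Fin n) k) F s).restrictScalars k

/-- `K^⊥ = { φ ∈ Hom_k(F,k) : φ vanishes on K }`. -/
def dualAnn (K : Submodule (MvPolynomial (Fin n) k) F) : Submodule k (F →ₗ[k] k) where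
  carrier := {φ | ∀ x ∈ K, φ x = 0}
  zero_mem' := by intro x hx; simp
  add_mem' := by
    intro a b ha hb x hx
    simp [ha x hx, hb x hx]
  smul_mem' := by
    intro c φ hφ x hx
    simp [hφ x hx]

/-- `M^⊥ = { f ∈ F : φ(f) = 0 for all φ ∈ M }` as a subset of `F`. -/
def perpSet (M : Submodule k (F →ₗ[k] k)) : Set F := {f | ∀ φ ∈ M, φ f = 0}

/-- A subspace `M ⊆ Hom_k(F,k)` is contraction-stable if it is closed under
`φ ↦ (f ↦ φ(s·f))` for all `s ∈ S`. -/
def ContractionStable (M : Submodule k (F →ₗ[k] k)) : Prop :=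
  ∀ (s : MvPolynomial (Fin n) k), ∀ φ ∈ M, φ.comp (contrMul k n F s) ∈ M

/-- apolarity for modules: `K ↦ K^⊥` and `M ↦ M^⊥` are mutually inverse,
inclusion-reversing bijections between cofinite `S`-submodules of `F` and
finite-dimensional contraction-stable subspaces of `Hom_k(F,k)`. -/
lemma dualAnn_eq (K : Submodule (MvPolynomial (Fin n) k) F) :
    dualAnn k n F K = (K.restrictScalars k).dualAnnihilator := by
  ext φ
  simp [dualAnn, Submodule.mem_dualAnnihilator]

lemma perpSet_eq (M : Submodule k (F →ₗ[k] k)) :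
    perpSet k F M = (M.dualCoannihilator : Set F) := by
  ext f
  simp [perpSet, Submodule.mem_dualCoannihilator]

theorem apolarity_for_modules [Module.Free (MvPolynomial (Fin n) k) F]
    [Module.Finite (MvPolynomial (Fin n) k) F] :
    (∀ K : Submodule (MvPolynomial (Fin n) k) F, FiniteDimensional k (F ⧸ K) →
        FiniteDimensional k (dualAnn k n F K) ∧
        ContractionStable k n F (dualAnn k n F K) ∧
        perpSet k F (dualAnn k n F K) = (K : Set F)) ∧
      (∀ M : Submodule k (F →ₗ[k] k), FiniteDimensional k M → ContractionStable k n F M →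
        ∃ K : Submodule (MvPolynomial (Fin n) k) F,
          (K : Set F) = perpSet k F M ∧ FiniteDimensional k (F ⧸ K) ∧
            dualAnn k n F K = M) ∧
      (∀ K K' : Submodule (MvPolynomial (Fin n) k) F, K ≤ K' →
        dualAnn k n F K' ≤ dualAnn k n F K) ∧
      (∀ M M' : Submodule k (F →ₗ[k] k), M ≤ M' →
        perpSet k F M' ⊆ perpSet k F M) := by
  refine ⟨?_, ?_, ?_, ?_⟩
  · intro K hK
    refine ⟨?_, ?_, ?_⟩
    · rw [dualAnn_eq]
      haveI : FiniteDimensional k (F ⧸ K.restrictScalars k) :=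
        (Submodule.Quotient.restrictScalarsEquiv k K).symm.finiteDimensional
      exact LinearEquiv.finiteDimensional
        (Submodule.dualQuotEquivDualAnnihilator (K.restrictScalars k))
    · intro s φ hφ x hx
      exact hφ (s • x) (K.smul_mem s hx)
    · rw [dualAnn_eq, perpSet_eq, Subspace.dualAnnihilator_dualCoannihilator_eq]
      rfl
  · intro M hM hstab
    refine ⟨{ carrier := perpSet k F M
              add_mem' := fun ha hb φ hφ => by
                simp [ha φ hφ, hb φ hφ]
              zero_mem' := fun φ _ => by simp
              smul_mem' := fun s f hf φ hφ => hf _ (hstab s φ hφ) }, rfl, ?_, ?_⟩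
    · set K : Submodule (MvPolynomial (Fin n) k) F :=
        { carrier := perpSet k F M
          add_mem' := fun ha hb φ hφ => by simp [ha φ hφ, hb φ hφ]
          zero_mem' := fun φ _ => by simp
          smul_mem' := fun s f hf φ hφ => hf _ (hstab s φ hφ) } with hKdef
      have hres : K.restrictScalars k = M.dualCoannihilator := by
        ext f
        rw [Submodule.mem_dualCoannihilator]
        exact Iff.rfl
      haveI : FiniteDimensional k (F ⧸ M.dualCoannihilator) :=
        (Subspace.finiteDimensional_quot_dualCoannihilator_iff (W := M)).mpr hM
      haveI : FiniteDimensional k (F ⧸ K.restrictScalars k) := by rw [hres]; infer_instance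
      exact (Submodule.Quotient.restrictScalarsEquiv k K).finiteDimensional
    · rw [dualAnn_eq]
      have hres : Submodule.restrictScalars k
          ({ carrier := perpSet k F M
             add_mem' := fun ha hb φ hφ => by simp [ha φ hφ, hb φ hφ]
             zero_mem' := fun φ _ => by simp
             smul_mem' := fun s f hf φ hφ => hf _ (hstab s φ hφ) } :
            Submodule (MvPolynomial (Fin n) k) F) = M.dualCoannihilator := by
        ext f
        rw [Submodule.mem_dualCoannihilator]
        exact Iff.rfl
      rw [hres]
      exact Subspace.dualCoannihilator_dualAnnihilator_eq
  · intro K K' h φ hφ x hx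
    exact hφ x (h hx)
  · intro M M' h f hf φ hφ
    exact hf φ (h hφ)
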